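/- Let η > 0 and set g(x) = e^{−x} · 1_{[0,η)}(x). Then for every L ≥ 0 one has ∑_{k=1}^∞ (T^k g)(L) ≤ 2 (1 − e^{−min(L,η)}) (1 + 2 e L), where e is Euler's number. -/

import Mathlib

open MeasureTheory Real

/-- The kernel operator `(Tg)(x) = ∫₀ˣ (e^{−y} + e^{−(x−y)}) g(y) dy`. -/
noncomputable def T (g : ℝ → ℝ) : ℝ → ℝ :=
  fun x => ∫ y in (0:ℝ)..x, (Real.exp (-y) + Real.exp (-(x - y))) * g y

/-!
The operator `T` has a positive kernel, so a nonnegative `W` with `T g + T W ≤ W` on `[0, ∞)`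
dominates every partial sum `Sₙ = ∑_{k<n} T^{k+1} g`: inductively `Sₙ₊₁ = T (g + Sₙ) ≤ T (g + W)`.
For `L ≤ η` the supersolution `W₁ x = 3x - 1 + e^{-x}` works, using only `g ≤ e^{-x}`; for
`L > η` we take `(1 - e^{-η}) W₂`, since `T g x ≤ (1 - e^{-η}) (1 + (1 + x) e^{-x})` and
`W₂ - T W₂ ≥ 1 + (1 + x) e^{-x}`. Writing the kernel as `e^{-y} + e^{-x} e^{y}`, the functions
`T g`, `T W₁`, `T W₂` are computed in closed form, and what is left are Taylor bounds for `e^{-x}`.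
-/

open Set

theorem MeasureTheory.LocallyIntegrable.intervalIntegrable {f : ℝ → ℝ}
    (hf : LocallyIntegrable f) (a b : ℝ) : IntervalIntegrable f volume a b :=
  (hf.integrableOn_isCompact isCompact_uIcc).intervalIntegrable

section Kernel

variable {f h : ℝ → ℝ}

theorem intervalIntegrable_kernel_mul (hf : LocallyIntegrable f) (x a b : ℝ) :
    IntervalIntegrable (fun y => (exp (-y) + exp (-(x - y))) * f y) volume a b :=
  (hf.intervalIntegrable a b).continuousOn_mul (by fun_prop)

theorem T_apply_eq (hf : LocallyIntegrable f) (x : ℝ) :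
    T f x = (∫ y in (0:ℝ)..x, exp (-y) * f y) + exp (-x) * ∫ y in (0:ℝ)..x, exp y * f y := by
  have hsplit : ∀ y,
      (exp (-y) + exp (-(x - y))) * f y = exp (-y) * f y + exp (-x) * (exp y * f y) := fun y => by
    rw [neg_sub, sub_eq_neg_add, exp_add]; ring
  simp only [T, hsplit]
  rw [intervalIntegral.integral_add ((hf.intervalIntegrable 0 x).continuousOn_mul (by fun_prop))
    (((hf.intervalIntegrable 0 x).continuousOn_mul (by fun_prop)).const_mul _),
    intervalIntegral.integral_const_mul]

theorem continuous_T (hf : LocallyIntegrable f) : Continuous (T f) := by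
  have hprimitive {c : ℝ → ℝ} (hc : Continuous c) :
      Continuous fun x => ∫ y in (0:ℝ)..x, c y * f y :=
    intervalIntegral.continuous_primitive
      (fun a b => (hf.intervalIntegrable a b).continuousOn_mul hc.continuousOn) 0
  rw [funext (T_apply_eq hf)]
  exact (hprimitive (by fun_prop)).add
    ((by fun_prop : Continuous fun x => exp (-x)).mul (hprimitive continuous_exp))

theorem T_mono (hf : LocallyIntegrable f) (hh : LocallyIntegrable h) {x : ℝ} (hx : 0 ≤ x)
    (hfh : ∀ y ∈ Icc 0 x, f y ≤ h y) : T f x ≤ T h x :=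
  intervalIntegral.integral_mono_on hx (intervalIntegrable_kernel_mul hf x 0 x)
    (intervalIntegrable_kernel_mul hh x 0 x)
    fun y hy => mul_le_mul_of_nonneg_left (hfh y hy) (by positivity)

theorem T_nonneg {x : ℝ} (hx : 0 ≤ x) (hf : ∀ y ∈ Icc 0 x, 0 ≤ f y) : 0 ≤ T f x :=
  intervalIntegral.integral_nonneg hx fun y hy => mul_nonneg (by positivity) (hf y hy)

theorem T_add (hf : LocallyIntegrable f) (hh : LocallyIntegrable h) (x : ℝ) :
    T (f + h) x = T f x + T h x := by
  simp only [T, Pi.add_apply, mul_add]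
  exact intervalIntegral.integral_add (intervalIntegrable_kernel_mul hf x 0 x)
    (intervalIntegrable_kernel_mul hh x 0 x)

theorem T_finset_sum {ι : Type*} (s : Finset ι) {f : ι → ℝ → ℝ}
    (hf : ∀ i ∈ s, LocallyIntegrable (f i)) (x : ℝ) :
    T (∑ i ∈ s, f i) x = ∑ i ∈ s, T (f i) x := by
  simp only [T, Finset.sum_apply, Finset.mul_sum]
  exact intervalIntegral.integral_finsetSum fun i hi =>
    intervalIntegrable_kernel_mul (hf i hi) x 0 x

theorem T_const_mul (c : ℝ) (f : ℝ → ℝ) (x : ℝ) : T (fun y => c * f y) x = c * T f x := by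
  simp only [T, mul_left_comm _ c, intervalIntegral.integral_const_mul]

theorem T_eq_of_hasDerivAt {F G : ℝ → ℝ} (hf : Continuous f)
    (hF : ∀ y, HasDerivAt F (exp (-y) * f y) y) (hG : ∀ y, HasDerivAt G (exp y * f y) y)
    (x : ℝ) : T f x = F x - F 0 + exp (-x) * (G x - G 0) := by
  have hprim : ∀ y ∈ uIcc 0 x, HasDerivAt (fun z => F z + exp (-x) * G z)
      ((exp (-y) + exp (-(x - y))) * f y) y := fun y _ => by
    refine ((hF y).add ((hG y).const_mul (exp (-x)))).congr_deriv ?_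
    rw [neg_sub, sub_eq_neg_add, exp_add]; ring
  rw [T, intervalIntegral.integral_eq_sub_of_hasDerivAt hprim
    ((by fun_prop : Continuous _).intervalIntegrable _ _)]
  ring

theorem locallyIntegrable_iterate_T (hf : LocallyIntegrable f) (k : ℕ) :
    LocallyIntegrable (T^[k] f) := by
  induction k with
  | zero => exact hf
  | succ k ih => rw [Function.iterate_succ_apply']; exact (continuous_T ih).locallyIntegrable

theorem iterate_T_nonneg (hf : ∀ y, 0 ≤ y → 0 ≤ f y) (k : ℕ) {x : ℝ} (hx : 0 ≤ x) :
    0 ≤ T^[k] f x := by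
  induction k generalizing x with
  | zero => exact hf x hx
  | succ k ih => rw [Function.iterate_succ_apply']; exact T_nonneg hx fun y hy => ih hy.1

theorem sum_range_iterate_T_le {W : ℝ → ℝ} (hf : LocallyIntegrable f) (hW : LocallyIntegrable W)
    (hW0 : ∀ x, 0 ≤ x → 0 ≤ W x) (hsup : ∀ x, 0 ≤ x → T f x + T W x ≤ W x) (n : ℕ) {x : ℝ}
    (hx : 0 ≤ x) : ∑ k ∈ Finset.range n, T^[k + 1] f x ≤ W x := by
  induction n generalizing x with
  | zero => simpa using hW0 x hx
  | succ n ih =>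
    have hsum : LocallyIntegrable (∑ k ∈ Finset.range (n + 1), T^[k] f) :=
      locallyIntegrable_finsetSum' _ fun k _ => locallyIntegrable_iterate_T hf k
    calc ∑ k ∈ Finset.range (n + 1), T^[k + 1] f x
        = T (∑ k ∈ Finset.range (n + 1), T^[k] f) x := by
          simp only [Function.iterate_succ_apply']
          exact (T_finset_sum _ (fun k _ => locallyIntegrable_iterate_T hf k) x).symm
      _ ≤ T (f + W) x := T_mono hsum (hf.add hW) hx fun y hy => by
          simpa [Finset.sum_range_succ', add_comm (f y)] using ih hy.1
      _ = T f x + T W x := T_add hf hW x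
      _ ≤ W x := hsup x hx

theorem summable_iterate_T_and_tsum_le {W : ℝ → ℝ} (hf : LocallyIntegrable f)
    (hf0 : ∀ y, 0 ≤ y → 0 ≤ f y) (hW : LocallyIntegrable W)
    (hW0 : ∀ x, 0 ≤ x → 0 ≤ W x) (hsup : ∀ x, 0 ≤ x → T f x + T W x ≤ W x) {x : ℝ}
    (hx : 0 ≤ x) : Summable (fun k => T^[k + 1] f x) ∧ ∑' k, T^[k + 1] f x ≤ W x :=
  have hnonneg k := iterate_T_nonneg hf0 (k + 1) hx
  have hbound n := sum_range_iterate_T_le hf hW hW0 hsup n hx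
  ⟨summable_of_sum_range_le hnonneg hbound, Real.tsum_le_of_sum_range_le hnonneg hbound⟩

end Kernel

theorem one_add_mul_exp_neg_le_one (x : ℝ) : (1 + x) * exp (-x) ≤ 1 := by
  calc (1 + x) * exp (-x) ≤ exp x * exp (-x) := by
        gcongr; linarith [add_one_le_exp x]
    _ = 1 := by rw [← exp_add, add_neg_cancel, exp_zero]

theorem one_sub_exp_neg_nonneg {x : ℝ} (hx : 0 ≤ x) : 0 ≤ 1 - exp (-x) :=
  sub_nonneg.2 (exp_le_one_iff.2 (neg_nonpos.2 hx))

theorem hasDerivAt_exp_neg (y : ℝ) : HasDerivAt (fun z => exp (-z)) (-exp (-y)) y := by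
  simpa using (hasDerivAt_neg y).exp

noncomputable def truncExp (η : ℝ) : ℝ → ℝ := fun x => exp (-x) * (Ico 0 η).indicator 1 x

theorem truncExp_eq_indicator (η : ℝ) : truncExp η = (Ico 0 η).indicator fun x => exp (-x) := by
  ext x
  by_cases hx : x ∈ Ico 0 η <;> simp [truncExp, hx]

theorem truncExp_nonneg (η x : ℝ) : 0 ≤ truncExp η x := by
  rw [truncExp_eq_indicator]
  exact indicator_nonneg (fun y _ => (exp_pos _).le) x

theorem locallyIntegrable_truncExp (η : ℝ) : LocallyIntegrable (truncExp η) := by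
  rw [truncExp_eq_indicator]
  exact (continuous_exp.comp continuous_neg).locallyIntegrable.indicator measurableSet_Ico

theorem intervalIntegral_indicator_Ico {F : ℝ → ℝ} {x η : ℝ} (hx : 0 ≤ x) (hη : 0 ≤ η) :
    ∫ y in 0..x, (Ico 0 η).indicator F y = ∫ y in 0..min x η, F y := by
  rw [← intervalIntegral.integral_indicator ⟨le_min hx hη, min_le_left x η⟩]
  calc ∫ y in 0..x, (Ico 0 η).indicator F y
      = ∫ y in 0..x, (Icc 0 η).indicator F y :=
        intervalIntegral.integral_congr_ae
          ((indicator_ae_eq_of_ae_eq_set Ico_ae_eq_Icc).mono fun y hy _ => hy)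
    _ = _ := intervalIntegral.integral_congr fun y hy => by
        rw [uIcc_of_le hx] at hy
        simp only [indicator_apply, mem_Icc, mem_ofPred_eq, le_min_iff, hy.1, hy.2, true_and]

theorem integral_kernel_mul_exp_neg (x m : ℝ) :
    ∫ y in 0..m, (exp (-y) + exp (-(x - y))) * exp (-y)
      = (1 - exp (-m) ^ 2) / 2 + m * exp (-x) := by
  have hprim : ∀ y ∈ uIcc 0 m, HasDerivAt (fun z => -exp (-z) ^ 2 / 2 + z * exp (-x))
      ((exp (-y) + exp (-(x - y))) * exp (-y)) y := fun y _ => by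
    refine ((((hasDerivAt_exp_neg y).pow 2).neg.div_const 2).add
      ((hasDerivAt_id y).mul_const _)).congr_deriv ?_
    have hcancel : exp (-(x - y)) * exp (-y) = exp (-x) := by rw [← exp_add]; ring_nf
    simp only [add_mul, hcancel]; ring
  rw [intervalIntegral.integral_eq_sub_of_hasDerivAt hprim
    ((by fun_prop : Continuous _).intervalIntegrable _ _)]
  simp; ring

theorem T_truncExp {η x : ℝ} (hη : 0 ≤ η) (hx : 0 ≤ x) :
    T (truncExp η) x = (1 - exp (-min x η) ^ 2) / 2 + min x η * exp (-x) := by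
  rw [← integral_kernel_mul_exp_neg, ← intervalIntegral_indicator_Ico hx hη, T,
    truncExp_eq_indicator]
  congr 1 with y
  by_cases hy : y ∈ Ico 0 η <;> simp [hy]

theorem T_truncExp_le {η x : ℝ} (hη : 0 ≤ η) (hx : 0 ≤ x) :
    T (truncExp η) x ≤ (1 - exp (-x) ^ 2) / 2 + x * exp (-x) := by
  have hm : min x η ≤ x := min_le_left x η
  rw [T_truncExp hη hx]
  gcongr

theorem T_truncExp_le_mul {η x : ℝ} (hη : 0 ≤ η) (hx : 0 ≤ x) :
    T (truncExp η) x ≤ (1 - exp (-η)) * (1 + (1 + x) * exp (-x)) := by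
  set m := min x η
  have hm0 : 0 ≤ m := le_min hx hη
  have hs : 0 ≤ exp (-x) := (exp_pos _).le
  have htm := one_add_mul_exp_neg_le_one m
  rw [T_truncExp hη hx]
  calc (1 - exp (-m) ^ 2) / 2 + m * exp (-x)
      ≤ (1 - exp (-m)) * (1 + (1 + m) * exp (-x)) := by
        nlinarith [sq_nonneg (1 - exp (-m)), mul_nonneg hs (sub_nonneg.2 htm)]
    _ ≤ (1 - exp (-η)) * (1 + (1 + x) * exp (-x)) := by
        have : 0 ≤ 1 - exp (-m) := one_sub_exp_neg_nonneg hm0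
        have : 0 ≤ 1 - exp (-η) := one_sub_exp_neg_nonneg hη
        have : m ≤ η := min_le_right x η
        have : m ≤ x := min_le_left x η
        gcongr

noncomputable def W₁ (x : ℝ) : ℝ := 3 * x - 1 + exp (-x)

theorem continuous_W₁ : Continuous W₁ := by unfold W₁; fun_prop

theorem W₁_nonneg {x : ℝ} (hx : 0 ≤ x) : 0 ≤ W₁ x := by
  unfold W₁; linarith [one_sub_le_exp_neg x]

theorem T_W₁ (x : ℝ) : T W₁ x = 3 * x - 3 / 2 + (2 - 2 * x) * exp (-x) - exp (-x) ^ 2 / 2 := by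
  have hF : ∀ y, HasDerivAt (fun z => -(3 * z + 2) * exp (-z) - exp (-z) ^ 2 / 2)
      (exp (-y) * W₁ y) y := fun y => by
    refine ((((hasDerivAt_id y).const_mul 3).add_const 2).neg.mul (hasDerivAt_exp_neg y)).sub
      (((hasDerivAt_exp_neg y).pow 2).div_const 2) |>.congr_deriv ?_
    simp only [W₁, id, Pi.neg_apply]; ring
  have hG : ∀ y, HasDerivAt (fun z => (3 * z - 4) * exp z + z) (exp y * W₁ y) y := fun y => by
    refine ((((hasDerivAt_id y).const_mul 3).sub_const 4).mul (hasDerivAt_exp y)).add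
      (hasDerivAt_id y) |>.congr_deriv ?_
    simp only [W₁, id, mul_add, ← exp_add, add_neg_cancel, exp_zero]; ring
  rw [T_eq_of_hasDerivAt continuous_W₁ hF hG]
  have hcancel : exp (-x) * exp x = 1 := by rw [← exp_add, neg_add_cancel, exp_zero]
  simp only [neg_zero, exp_zero]
  linear_combination (3 * x - 4) * hcancel

theorem T_truncExp_add_T_W₁_le {η x : ℝ} (hη : 0 ≤ η) (hx : 0 ≤ x) :
    T (truncExp η) x + T W₁ x ≤ W₁ x := by
  have hs : 0 ≤ exp (-x) := (exp_pos _).le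
  have := T_truncExp_le hη hx
  rw [T_W₁]
  unfold W₁
  nlinarith [mul_nonneg hs (sub_nonneg.2 (one_sub_le_exp_neg x))]

theorem W₁_le (L : ℝ) : W₁ L ≤ 2 * (1 - exp (-L)) * (1 + 2 * exp 1 * L) := by
  have he := exp_one_gt_d9
  have h1 := one_add_mul_exp_neg_le_one L
  have h2 := one_sub_le_exp_neg L
  have c1 : 0 ≤ 4 * exp 1 * (1 - (1 + L) * exp (-L)) := mul_nonneg (by positivity) (by linarith)
  have c2 : 0 ≤ (4 * exp 1 - 3) * (L + exp (-L) - 1) := mul_nonneg (by linarith) (by linarith)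
  unfold W₁
  nlinarith

-- The slope `4e` is the largest that `W₂_le` allows; `le_W₂_sub_T_W₂` fails near `0` for
-- slopes below `10`.
noncomputable def W₂ (x : ℝ) : ℝ := -6 + 4 * exp 1 * x + (8 + 2 * x) * exp (-x)

theorem continuous_W₂ : Continuous W₂ := by unfold W₂; fun_prop

theorem W₂_nonneg {x : ℝ} (hx : 0 ≤ x) : 0 ≤ W₂ x := by
  have he := exp_one_gt_d9
  have hs : 0 ≤ exp (-x) := (exp_pos _).le
  unfold W₂
  rcases le_or_gt x (3 / 2) with h | h
  · nlinarith [mul_nonneg (by linarith : (0:ℝ) ≤ 8 + 2 * x)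
      (sub_nonneg.2 (one_sub_le_exp_neg x)), mul_nonneg hx (by linarith : (0:ℝ) ≤ 3 - 2 * x)]
  · nlinarith [mul_nonneg (by linarith : (0:ℝ) ≤ 8 + 2 * x) hs]

theorem W₂_le {L : ℝ} (hL : 0 ≤ L) : W₂ L ≤ 2 * (1 + 2 * exp 1 * L) := by
  have h1 := one_add_mul_exp_neg_le_one L
  have hs : 0 ≤ exp (-L) := (exp_pos _).le
  unfold W₂
  nlinarith [mul_nonneg hL hs]

theorem T_W₂ (x : ℝ) : T W₂ x = 4 * exp 1 * x - 15 / 2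
    + (12 + 8 * x + x ^ 2 - 4 * exp 1 * x) * exp (-x) - (x + 9 / 2) * exp (-x) ^ 2 := by
  have hF : ∀ y, HasDerivAt
      (fun z => (6 - 4 * exp 1 * (z + 1)) * exp (-z) - (z + 9 / 2) * exp (-z) ^ 2)
      (exp (-y) * W₂ y) y := fun y => by
    refine ((((hasDerivAt_id y).add_const 1).const_mul (4 * exp 1)).const_sub 6).mul
      (hasDerivAt_exp_neg y) |>.sub (((hasDerivAt_id y).add_const (9 / 2)).mul
      ((hasDerivAt_exp_neg y).pow 2)) |>.congr_deriv ?_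
    simp only [W₂, id, Pi.pow_apply]; ring
  have hG : ∀ y, HasDerivAt (fun z => (-6 + 4 * exp 1 * (z - 1)) * exp z + 8 * z + z ^ 2)
      (exp y * W₂ y) y := fun y => by
    refine (((((hasDerivAt_id y).sub_const 1).const_mul (4 * exp 1)).const_add (-6)).mul
      (hasDerivAt_exp y)).add ((hasDerivAt_id y).const_mul 8) |>.add
      ((hasDerivAt_id y).pow 2) |>.congr_deriv ?_
    have hcancel : exp y * exp (-y) = 1 := by rw [← exp_add, add_neg_cancel, exp_zero]
    simp only [W₂, id]
    linear_combination (-(8 + 2 * y)) * hcancel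
  rw [T_eq_of_hasDerivAt continuous_W₂ hF hG]
  have hcancel : exp (-x) * exp x = 1 := by rw [← exp_add, neg_add_cancel, exp_zero]
  simp only [neg_zero, exp_zero]
  linear_combination (-6 + 4 * exp 1 * (x - 1)) * hcancel

theorem taylor_mul_exp_neg_le_one {x : ℝ} (hx : 0 ≤ x) :
    (1 + x + x ^ 2 / 2 + x ^ 3 / 6 + x ^ 4 / 24) * exp (-x) ≤ 1 := by
  have h := sum_le_exp_of_nonneg hx 5
  norm_num [Finset.sum_range_succ, Nat.factorial] at h
  rw [exp_neg, mul_inv_le_iff₀ (exp_pos x)]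
  linarith

theorem sq_one_sub_half_le_exp_neg {x : ℝ} (hx : x ≤ 2) : (1 - x / 2) ^ 2 ≤ exp (-x) := by
  calc (1 - x / 2) ^ 2 ≤ exp (-(x / 2)) ^ 2 := by
        gcongr
        · linarith
        · linarith [one_sub_le_exp_neg (x / 2)]
    _ = exp (-x) := by rw [← exp_nat_mul]; ring_nf

theorem le_W₂_sub_T_W₂ {x : ℝ} (hx : 0 ≤ x) : 1 + (1 + x) * exp (-x) ≤ W₂ x - T W₂ x := by
  have he := exp_one_gt_d9
  have ht := exp_pos (-x)
  have htaylor := taylor_mul_exp_neg_le_one hx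
  rw [T_W₂]
  unfold W₂
  set t := exp (-x)
  suffices -((1 + x + x ^ 2 / 2 + x ^ 3 / 6 + x ^ 4 / 24) / 2) * t
      ≤ t * (-5 + (4 * exp 1 - 7) * x - x ^ 2) + t ^ 2 * (9 / 2 + x) by
    nlinarith
  rcases le_or_gt x 2 with h2 | h2
  · have hpoly : -((1 + x + x ^ 2 / 2 + x ^ 3 / 6 + x ^ 4 / 24) / 2)
        ≤ -5 + (4 * exp 1 - 7) * x - x ^ 2 + (1 - x / 2) ^ 2 * (9 / 2 + x) := by
      nlinarith [mul_nonneg hx (sq_nonneg (x - 15 / 16)), pow_nonneg hx 4,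
        mul_nonneg hx (by linarith : (0:ℝ) ≤ 4 * exp 1 - 10 - 75 / 256)]
    have hsq := sq_one_sub_half_le_exp_neg h2
    nlinarith [mul_nonneg (mul_nonneg ht.le (sub_nonneg.2 hsq)) (by linarith : (0:ℝ) ≤ 9 / 2 + x)]
  · have hu : 0 ≤ x - 2 := by linarith
    have hpoly : -((1 + x + x ^ 2 / 2 + x ^ 3 / 6 + x ^ 4 / 24) / 2)
        ≤ -5 + (4 * exp 1 - 7) * x - x ^ 2 := by
      nlinarith [sq_nonneg (x - 2), pow_nonneg hu 3, pow_nonneg hu 4,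
        mul_nonneg hu (by linarith : (0:ℝ) ≤ 4 * exp 1 - 13 / 2 - 4 / 3)]
    nlinarith [mul_nonneg (sq_nonneg t) (by linarith : (0:ℝ) ≤ 9 / 2 + x)]

theorem T_truncExp_add_T_mul_W₂_le {η x : ℝ} (hη : 0 ≤ η) (hx : 0 ≤ x) :
    T (truncExp η) x + T (fun y => (1 - exp (-η)) * W₂ y) x ≤ (1 - exp (-η)) * W₂ x := by
  have hq := one_sub_exp_neg_nonneg hη
  rw [T_const_mul]
  nlinarith [T_truncExp_le_mul hη hx, mul_le_mul_of_nonneg_left (le_W₂_sub_T_W₂ hx) hq]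

theorem stmt_6 (η : ℝ) (hη : 0 < η) (L : ℝ) (hL : 0 ≤ L) :
    Summable (fun k : ℕ =>
      T^[k + 1] (fun x => Real.exp (-x) * Set.indicator (Set.Ico (0:ℝ) η) 1 x) L) ∧
    (∑' k : ℕ, T^[k + 1] (fun x => Real.exp (-x) * Set.indicator (Set.Ico (0:ℝ) η) 1 x) L) ≤
      2 * (1 - Real.exp (-(min L η))) * (1 + 2 * Real.exp 1 * L) := by
  change Summable (fun k => T^[k + 1] (truncExp η) L) ∧ ∑' k, T^[k + 1] (truncExp η) L ≤ _
  have hf := locallyIntegrable_truncExp η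
  have hf0 (y : ℝ) (_ : 0 ≤ y) := truncExp_nonneg η y
  rcases le_total L η with hLη | hηL
  · obtain ⟨hsum, hle⟩ := summable_iterate_T_and_tsum_le hf hf0
      continuous_W₁.locallyIntegrable (fun _ => W₁_nonneg) (fun _ => T_truncExp_add_T_W₁_le hη.le)
      hL
    rw [min_eq_left hLη]
    exact ⟨hsum, hle.trans (W₁_le L)⟩
  · have hq := one_sub_exp_neg_nonneg hη.le
    obtain ⟨hsum, hle⟩ := summable_iterate_T_and_tsum_le hf hf0
      (continuous_W₂.const_mul _).locallyIntegrable (fun x hx => mul_nonneg hq (W₂_nonneg hx))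
      (fun _ => T_truncExp_add_T_mul_W₂_le hη.le) hL
    rw [min_eq_right hηL]
    refine ⟨hsum, hle.trans ?_⟩
    calc (1 - exp (-η)) * W₂ L ≤ (1 - exp (-η)) * (2 * (1 + 2 * exp 1 * L)) := by
          gcongr; exact W₂_le hL
      _ = 2 * (1 - exp (-η)) * (1 + 2 * exp 1 * L) := by ring
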